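/- Let n ≥ 1, let ζ ∈ 𝒰 with parametrized coordinates [z,t,h] (h > 0), and let A ⊆ ℍₙ be a set containing the ball B([z,t], h^{1/2}). Then the Poisson integral of the indicator of A is bounded below: ∫_{Ψ⁻¹(A)} P(ζ,ω) dH_{2n+1}(ω) ≥ c > 0, where c depends only on n. In particular, the Poisson measure of the 'shadow ball' B([z,t],h^{1/2}) as seen from ζ is bounded below by a dimensional constant. -/

import Mathlib

open MeasureTheory Complex

noncomputable section

/-- Twisted imaginary part Im(z·w̄) on ℂⁿ. -/
def hIm {n : ℕ} (z w : Fin n → ℂ) : ℝ := ∑ i, (z i * (starRingEnd ℂ) (w i)).im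

/-- Squared Euclidean norm |z|² on ℂⁿ. -/
def nsq {n : ℕ} (z : Fin n → ℂ) : ℝ := ∑ i, ‖z i‖ ^ 2

/-- Folland–Kaplan gauge distance on ℍₙ = ℂⁿ × ℝ: d([z,t],[w,s]) = d([z,t]·[w,s]⁻¹),
    i.e. d([z,t],[w,s])⁴ = (1/16)|z−w|⁴ + (t−s+½Im(z·w̄))². -/
def hGauge {n : ℕ} (x y : (Fin n → ℂ) × ℝ) : ℝ :=
  ((1 / 16) * nsq (x.1 - y.1) ^ 2 + (x.2 - y.2 + (1 / 2) * hIm x.1 y.1) ^ 2) ^ ((1 : ℝ) / 4)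

/-- Fourth power of the parametrized gauge d([z,t,h],[w,s])⁴. -/
def dParam4 {n : ℕ} (z : Fin n → ℂ) (t h : ℝ) (w : Fin n → ℂ) (s : ℝ) : ℝ :=
  ((1 / 4) * nsq (z - w) + 4 * h) ^ 2 + (t - s + (1 / 2) * hIm z w) ^ 2

/-!
On the box where `|z - w|² ≤ h` and `|t - s + ½ Im(z·w̄)| < h/2` (a product of `n` discs of
radius `√(h/(n+1))`, sheared vertically along the Heisenberg group law) one has `d⁴ ≤ 19 h²`,
so the Poisson kernel is at least `(19 h)^{-(n+1)}` there. The box lies in the gauge ball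
`B([z,t], h^{1/2})` and has volume `(π h/(n+1))ⁿ · h`, and the powers of `h` cancel.
Enlarging the domain from the box to `A` only increases the integral because the kernel is
integrable on all of `ℍₙ`: `d⁴ ≳ (1 + ‖[w,s] - [z,t]‖)²`, so the kernel decays like
`(1 + ‖·‖)^{-2(n+1)}` in real dimension `2n + 1`.
-/

lemma nsq_nonneg {n : ℕ} (z : Fin n → ℂ) : 0 ≤ nsq z := by
  unfold nsq; positivity

lemma nsq_sub_comm {n : ℕ} (z w : Fin n → ℂ) : nsq (z - w) = nsq (w - z) := by
  simp only [nsq, Pi.sub_apply, norm_sub_rev]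

lemma norm_sq_le_nsq {n : ℕ} (u : Fin n → ℂ) : ‖u‖ ^ 2 ≤ nsq u := by
  have hcoord : ∀ i, ‖u i‖ ≤ √(nsq u) := fun i => by
    unfold nsq
    simpa using Real.abs_le_sqrt
      (Finset.single_le_sum (f := fun j => ‖u j‖ ^ 2) (fun j _ => by positivity)
        (Finset.mem_univ i))
  have hu : ‖u‖ ≤ √(nsq u) := (pi_norm_le_iff_of_nonneg (Real.sqrt_nonneg _)).mpr hcoord
  exact (Real.le_sqrt (norm_nonneg _) (nsq_nonneg u)).mp hu

lemma nsq_sub_le_of_mem_pi_ball {n : ℕ} {z w : Fin n → ℂ} {r : ℝ}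
    (hw : w ∈ Set.univ.pi fun i => Metric.ball (z i) r) : nsq (z - w) ≤ n * r ^ 2 := by
  calc nsq (z - w) ≤ ∑ _i : Fin n, r ^ 2 := by
        refine Finset.sum_le_sum fun i _ => pow_le_pow_left₀ (norm_nonneg _) ?_ 2
        have := Metric.mem_ball.mp (hw i (Set.mem_univ i))
        rw [Complex.dist_eq] at this
        simpa [norm_sub_rev] using this.le
    _ = n * r ^ 2 := by simp

lemma hIm_sub_self {n : ℕ} (z w : Fin n → ℂ) : hIm z (w - z) = hIm z w := by
  simp [hIm, mul_sub, Complex.mul_conj]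

lemma hIm_sq_le_nsq_mul_nsq {n : ℕ} (z u : Fin n → ℂ) : hIm z u ^ 2 ≤ nsq z * nsq u := by
  have habs : |hIm z u| ≤ ∑ i, ‖z i‖ * ‖u i‖ := by
    refine (Finset.abs_sum_le_sum_abs _ _).trans (Finset.sum_le_sum fun i _ => ?_)
    simpa using Complex.abs_im_le_norm (z i * (starRingEnd ℂ) (u i))
  calc hIm z u ^ 2 ≤ (∑ i, ‖z i‖ * ‖u i‖) ^ 2 :=
        sq_le_sq' (abs_le.mp habs).1 (abs_le.mp habs).2
    _ ≤ nsq z * nsq u := Finset.sum_mul_sq_le_sq_mul_sq _ _ _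

@[fun_prop]
lemma continuous_hIm {n : ℕ} (z : Fin n → ℂ) : Continuous (hIm z) := by
  unfold hIm; fun_prop

section dParam4

variable {n : ℕ} (z : Fin n → ℂ) (t h : ℝ) (w : Fin n → ℂ) (s : ℝ)

lemma sq_le_dParam4 (hh : 0 ≤ h) : 16 * h ^ 2 ≤ dParam4 z t h w s := by
  unfold dParam4
  nlinarith [mul_nonneg (nsq_nonneg (z - w)) hh, sq_nonneg (nsq (z - w)),
    sq_nonneg (t - s + (1 / 2) * hIm z w)]

lemma mul_nsq_le_dParam4 : 4 * h * nsq (z - w) ≤ dParam4 z t h w s := by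
  unfold dParam4
  nlinarith [sq_nonneg (t - s + (1 / 2) * hIm z w), sq_nonneg ((1 / 4) * nsq (z - w) - 4 * h)]

lemma sq_vertical_le_dParam4 : (t - s + (1 / 2) * hIm z w) ^ 2 ≤ dParam4 z t h w s := by
  unfold dParam4; nlinarith [sq_nonneg ((1 / 4) * nsq (z - w) + 4 * h)]

lemma dParam4_pos (hh : 0 < h) : 0 < dParam4 z t h w s :=
  (by positivity : (0 : ℝ) < 16 * h ^ 2).trans_le (sq_le_dParam4 z t h w s hh.le)

lemma continuous_dParam4 : Continuous fun p : (Fin n → ℂ) × ℝ => dParam4 z t h p.1 p.2 := by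
  unfold dParam4 nsq; fun_prop

end dParam4

lemma one_add_norm_sq_le_dParam4 {n : ℕ} (z : Fin n → ℂ) (t : ℝ) {h : ℝ} (hh : 0 < h) :
    ∃ K > 0, ∀ p : (Fin n → ℂ) × ℝ,
      (1 + ‖p - (z, t)‖) ^ 2 ≤ K * dParam4 z t h p.1 p.2 := by
  refine ⟨3 * (1 / (16 * h ^ 2) + 1 / (4 * h) + 2 + nsq z / (8 * h)), by
    have := nsq_nonneg z; positivity, fun ⟨w, s⟩ => ?_⟩
  set D := dParam4 z t h w s
  have hone : 1 ≤ D / (16 * h ^ 2) :=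
    (one_le_div (by positivity)).mpr (sq_le_dParam4 z t h w s hh.le)
  have hhor : ‖w - z‖ ^ 2 ≤ D / (4 * h) := by
    rw [le_div_iff₀ (by positivity)]
    nlinarith [norm_sq_le_nsq (w - z), mul_nsq_le_dParam4 z t h w s, nsq_sub_comm z w]
  have hver : (s - t) ^ 2 ≤ 2 * D + nsq z * D / (8 * h) := by
    have hcs : hIm z w ^ 2 ≤ nsq z * (D / (4 * h)) := by
      rw [← hIm_sub_self]
      refine (hIm_sq_le_nsq_mul_nsq z (w - z)).trans
        (mul_le_mul_of_nonneg_left ?_ (nsq_nonneg z))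
      rw [le_div_iff₀ (by positivity), nsq_sub_comm]
      linarith [mul_nsq_le_dParam4 z t h w s]
    have : nsq z * (D / (4 * h)) = 2 * (nsq z * D / (8 * h)) := by field_simp; ring
    nlinarith [sq_vertical_le_dParam4 z t h w s, sq_nonneg (s - t - hIm z w)]
  have hnorm : ‖(w, s) - (z, t)‖ ≤ ‖w - z‖ + |s - t| := by
    simp only [Prod.fst_sub, Prod.snd_sub, Prod.norm_def, Real.norm_eq_abs]
    exact max_le_add_of_nonneg (norm_nonneg (w - z)) (abs_nonneg (s - t))
  calc (1 + ‖(w, s) - (z, t)‖) ^ 2 ≤ (1 + ‖w - z‖ + |s - t|) ^ 2 :=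
        pow_le_pow_left₀ (by positivity) (by linarith) 2
    _ ≤ 3 * (1 + ‖w - z‖ ^ 2 + (s - t) ^ 2) := by
        nlinarith [sq_abs (s - t), sq_nonneg (1 - ‖w - z‖), sq_nonneg (1 - |s - t|),
          sq_nonneg (‖w - z‖ - |s - t|)]
    _ ≤ 3 * (D / (16 * h ^ 2) + D / (4 * h) + (2 * D + nsq z * D / (8 * h))) := by gcongr
    _ = _ := by field_simp; ring

lemma integrable_inv_one_add_norm_pow {E : Type*} [NormedAddCommGroup E] [NormedSpace ℝ E]
    [FiniteDimensional ℝ E] [MeasurableSpace E] [BorelSpace E] (μ : Measure E)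
    [μ.IsAddHaarMeasure] {k : ℕ} (hk : Module.finrank ℝ E < k) :
    Integrable (fun x => ((1 + ‖x‖) ^ k)⁻¹) μ := by
  refine (integrable_one_add_norm (μ := μ) (r := k) (by exact_mod_cast hk)).congr
    (Filter.Eventually.of_forall fun x => ?_)
  simp only [Real.rpow_neg (by positivity : (0 : ℝ) ≤ 1 + ‖x‖), Real.rpow_natCast]

lemma integrable_poisson {n : ℕ} (z : Fin n → ℂ) (t : ℝ) {h : ℝ} (hh : 0 < h) :
    Integrable fun p : (Fin n → ℂ) × ℝ => h ^ (n + 1) / dParam4 z t h p.1 p.2 ^ (n + 1) := by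
  obtain ⟨K, hK, hbound⟩ := one_add_norm_sq_le_dParam4 z t hh
  have hdim : Module.finrank ℝ ((Fin n → ℂ) × ℝ) < 2 * (n + 1) := by
    simp [Module.finrank_prod, Module.finrank_pi_fintype, Complex.finrank_real_complex]; omega
  have : (volume : Measure ((Fin n → ℂ) × ℝ)).IsAddHaarMeasure := by
    rw [Measure.volume_eq_prod]; exact Measure.prod.instIsAddHaarMeasure _ _
  have hmajorant := ((integrable_inv_one_add_norm_pow volume hdim).comp_sub_right (z, t)).const_mul
    ((h * K) ^ (n + 1))
  refine hmajorant.mono' ?_ (Filter.Eventually.of_forall fun p => ?_)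
  · exact (continuous_const.div ((continuous_dParam4 z t h).pow _) fun p =>
      pow_ne_zero _ (dParam4_pos z t h p.1 p.2 hh).ne').aestronglyMeasurable
  · have hD := dParam4_pos z t h p.1 p.2 hh
    rw [Real.norm_of_nonneg (by positivity)]
    calc h ^ (n + 1) / dParam4 z t h p.1 p.2 ^ (n + 1)
        = (h * K) ^ (n + 1) / (K * dParam4 z t h p.1 p.2) ^ (n + 1) := by
          rw [mul_pow, mul_pow]; field_simp
      _ ≤ (h * K) ^ (n + 1) / ((1 + ‖p - (z, t)‖) ^ 2) ^ (n + 1) := by gcongr; exact hbound p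
      _ = _ := by rw [← pow_mul, div_eq_mul_inv]

section shearedSlab

variable {α : Type*} [MeasurableSpace α]

def shearedSlab (S : Set α) (f : α → ℝ) (a : ℝ) : Set (α × ℝ) :=
  {p | p.1 ∈ S ∧ p.2 ∈ Set.Ioo (f p.1 - a) (f p.1 + a)}

lemma measurableSet_shearedSlab {S : Set α} (hS : MeasurableSet S) {f : α → ℝ}
    (hf : Measurable f) (a : ℝ) : MeasurableSet (shearedSlab S f a) :=
  (measurable_fst hS).inter <|
    (measurableSet_lt ((hf.comp measurable_fst).sub_const a) measurable_snd).inter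
      (measurableSet_lt measurable_snd ((hf.comp measurable_fst).add_const a))

lemma prod_volume_shearedSlab (μ : Measure α) [SFinite μ] {S : Set α} (hS : MeasurableSet S)
    {f : α → ℝ} (hf : Measurable f) (a : ℝ) :
    μ.prod volume (shearedSlab S f a) = μ S * ENNReal.ofReal (2 * a) := by
  have hsection : ∀ x, volume (Prod.mk x ⁻¹' shearedSlab S f a) =
      S.indicator (fun _ => ENNReal.ofReal (2 * a)) x := by
    intro x
    by_cases hx : x ∈ S
    · have : Prod.mk x ⁻¹' shearedSlab S f a = Set.Ioo (f x - a) (f x + a) := by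
        ext; simp [shearedSlab, hx]
      rw [this, Real.volume_Ioo, Set.indicator_of_mem hx]
      ring_nf
    · have : Prod.mk x ⁻¹' shearedSlab S f a = ∅ := by
        ext; simp [shearedSlab, hx]
      rw [this, measure_empty, Set.indicator_of_notMem hx]
  rw [Measure.prod_apply (measurableSet_shearedSlab hS hf a), lintegral_congr hsection,
    lintegral_indicator_const hS, mul_comm]

end shearedSlab

def shadowBox {n : ℕ} (z : Fin n → ℂ) (t h : ℝ) : Set ((Fin n → ℂ) × ℝ) :=
  shearedSlab (Set.univ.pi fun i => Metric.ball (z i) √(h / (n + 1))) (fun w => t + hIm z w / 2)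
    (h / 2)

section shadowBox

variable {n : ℕ} (z : Fin n → ℂ) (t : ℝ) {h : ℝ}

lemma measurableSet_shadowBox : MeasurableSet (shadowBox z t h) :=
  measurableSet_shearedSlab (MeasurableSet.univ_pi fun _ => measurableSet_ball)
    (by fun_prop : Continuous fun w => t + hIm z w / 2).measurable _

lemma volume_shadowBox (hh : 0 ≤ h) :
    volume (shadowBox z t h) = ENNReal.ofReal ((Real.pi * h / (n + 1)) ^ n * h) := by
  rw [shadowBox, Measure.volume_eq_prod, prod_volume_shearedSlab volume
    (MeasurableSet.univ_pi fun _ => measurableSet_ball)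
    (by fun_prop : Continuous fun w => t + hIm z w / 2).measurable, volume_pi_pi]
  simp only [Complex.volume_ball, Finset.prod_const, Finset.card_univ, Fintype.card_fin]
  rw [← ENNReal.ofReal_pow (Real.sqrt_nonneg _), Real.sq_sqrt (by positivity),
    ← ENNReal.ofReal_coe_nnreal, NNReal.coe_real_pi, ← ENNReal.ofReal_mul (by positivity),
    ← ENNReal.ofReal_pow (by positivity), ← ENNReal.ofReal_mul (by positivity)]
  congr 1; ring

variable {z t}

lemma nsq_le_and_sq_lt_of_mem_shadowBox (hh : 0 ≤ h) {p : (Fin n → ℂ) × ℝ}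
    (hp : p ∈ shadowBox z t h) :
    nsq (z - p.1) ≤ h ∧ (t - p.2 + (1 / 2) * hIm z p.1) ^ 2 < h ^ 2 / 4 := by
  obtain ⟨hball, hlow, hupp⟩ := hp
  refine ⟨(nsq_sub_le_of_mem_pi_ball hball).trans ?_, ?_⟩
  · rw [Real.sq_sqrt (by positivity), mul_div_assoc']
    exact div_le_of_le_mul₀ (by positivity) hh (by linarith)
  · nlinarith

lemma dParam4_le_of_mem_shadowBox (hh : 0 ≤ h) {p : (Fin n → ℂ) × ℝ}
    (hp : p ∈ shadowBox z t h) : dParam4 z t h p.1 p.2 ≤ 19 * h ^ 2 := by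
  obtain ⟨hnsq, hver⟩ := nsq_le_and_sq_lt_of_mem_shadowBox hh hp
  unfold dParam4
  nlinarith [nsq_nonneg (z - p.1)]

lemma shadowBox_subset_gaugeBall (hh : 0 < h) :
    shadowBox z t h ⊆ {y | hGauge (z, t) y < √h} := by
  intro p hp
  obtain ⟨hnsq, hver⟩ := nsq_le_and_sq_lt_of_mem_shadowBox hh.le hp
  have hquartic : (1 / 16) * nsq (z - p.1) ^ 2 + (t - p.2 + (1 / 2) * hIm z p.1) ^ 2 < h ^ 2 := by
    nlinarith [nsq_nonneg (z - p.1)]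
  calc hGauge (z, t) p < (h ^ 2) ^ ((1 : ℝ) / 4) :=
        Real.rpow_lt_rpow (by positivity) hquartic (by norm_num)
    _ = √h := by
        rw [← Real.rpow_natCast h 2, ← Real.rpow_mul hh.le, Real.sqrt_eq_rpow]
        norm_num

lemma le_setIntegral_poisson_shadowBox (hh : 0 < h) :
    Real.pi ^ n / ((n + 1) ^ n * 19 ^ (n + 1))
      ≤ ∫ p in shadowBox z t h, h ^ (n + 1) / dParam4 z t h p.1 p.2 ^ (n + 1) := by
  have hvolume := volume_shadowBox z t hh.le
  have hlower : ∀ p ∈ shadowBox z t h,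
      1 / (19 * h) ^ (n + 1) ≤ h ^ (n + 1) / dParam4 z t h p.1 p.2 ^ (n + 1) := by
    intro p hp
    have hD := dParam4_pos z t h p.1 p.2 hh
    calc 1 / (19 * h) ^ (n + 1) = h ^ (n + 1) / (19 * h ^ 2) ^ (n + 1) := by
          field_simp; ring
      _ ≤ _ := by gcongr; exact dParam4_le_of_mem_shadowBox hh.le hp
  have hint := setIntegral_ge_of_const_le_real (measurableSet_shadowBox z t)
    (by simp [hvolume]) hlower (integrable_poisson z t hh).integrableOn
  rw [measureReal_def, hvolume, ENNReal.toReal_ofReal (by positivity)] at hint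
  convert hint using 1
  rw [div_pow, mul_pow, mul_pow]
  field_simp
  ring

end shadowBox

theorem stmt13_general (n : ℕ) :
    ∃ c : ℝ, 0 < c ∧
      ∀ (z : Fin n → ℂ) (t h : ℝ), 0 < h →
        ∀ A : Set ((Fin n → ℂ) × ℝ), MeasurableSet A →
          {y : (Fin n → ℂ) × ℝ | hGauge (z, t) y < Real.sqrt h} ⊆ A →
          c ≤ ∫ ws in A, h ^ (n + 1) / dParam4 z t h ws.1 ws.2 ^ (n + 1) := by
  refine ⟨Real.pi ^ n / ((n + 1) ^ n * 19 ^ (n + 1)), by positivity, ?_⟩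
  intro z t h hh A _ hA
  refine (le_setIntegral_poisson_shadowBox hh).trans <|
    setIntegral_mono_set (integrable_poisson z t hh).integrableOn ?_
      ((shadowBox_subset_gaugeBall hh).trans hA).eventuallyLE
  exact Filter.Eventually.of_forall fun p => by
    have := dParam4_pos z t h p.1 p.2 hh
    positivity

/-- if ζ has parametrized coordinates [z,t,h] with h > 0, and A contains
    the gauge ball B([z,t],h^{1/2}), then the Poisson integral of the indicator of A,
    ∫_{Ψ⁻¹(A)} P(ζ,ω) dH_{2n+1}(ω) = ∫_A h^{n+1}/d([z,t,h],[w,s])^{4(n+1)} dH_{2n+1},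
    is bounded below by a dimensional constant c > 0. -/
theorem stmt13 (n : ℕ) (hn : 1 ≤ n) :
    ∃ c : ℝ, 0 < c ∧
      ∀ (z : Fin n → ℂ) (t h : ℝ), 0 < h →
        ∀ A : Set ((Fin n → ℂ) × ℝ), MeasurableSet A →
          {y : (Fin n → ℂ) × ℝ | hGauge (z, t) y < Real.sqrt h} ⊆ A →
          c ≤ ∫ ws in A, h ^ (n + 1) / dParam4 z t h ws.1 ws.2 ^ (n + 1) :=
  stmt13_general n
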